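/- Full-dimensionality for strongly connected periodic graphs: let (G, δ) be a displacement graph in dimension d whose associated periodic graph G̃ is strongly connected. Then 0 is an interior point (in ℝ^d) of the convex hull of the set of all velocities of trajectories of (G, δ); in particular, this convex hull is full-dimensional. -/

import Mathlib

/-- A path in a directed multigraph with source map `s` and target map `t`:
a nonempty list of edges `e₁ … e_n` with `t eᵢ = s eᵢ₊₁`. -/
def IsPathList {V E : Type*} (s t : E → V) (p : List E) : Prop :=
  p ≠ [] ∧ p.Chain' (fun e f => t e = s f)

/-- A cycle: a path `e₁ … e_n` with `s e₁ = t e_n` whose vertices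
`s e₁, …, s e_n` are pairwise distinct. -/
def IsCycleList {V E : Type*} (s t : E → V) (p : List E) : Prop :=
  ∃ h : p ≠ [], p.Chain' (fun e f => t e = s f) ∧
    s (p.head h) = t (p.getLast h) ∧ (p.map s).Nodup

/-- Regard a vector of `ℤ^d` as a point of Euclidean space `ℝ^d`. -/
def toR {d : ℕ} (x : Fin d → ℤ) : EuclideanSpace ℝ (Fin d) := WithLp.toLp 2 (fun i => (x i : ℝ))

/-- A trajectory: a sequence of edges with `s (f (n+1)) = t (f n)`. -/
def IsTrajectory {V E : Type*} (s t : E → V) (f : ℕ → E) : Prop :=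
  ∀ n : ℕ, s (f (n + 1)) = t (f n)

/-- `u` is the velocity of the trajectory `f`:
`(1/n) · ∑_{k=1}^n δ(f k) → u` as `n → ∞`. -/
def HasVelocity {d : ℕ} {E : Type*} (δ : E → Fin d → ℤ) (f : ℕ → E)
    (u : EuclideanSpace ℝ (Fin d)) : Prop :=
  Filter.Tendsto (fun n : ℕ => (n : ℝ)⁻¹ • ∑ k ∈ Finset.Icc 1 n, toR (δ (f k)))
    Filter.atTop (nhds u)

/-- The set of basic velocities `δ(c)/|c|` of cycles `c`. -/
def basicVelocities {d : ℕ} {V E : Type*} (s t : E → V) (δ : E → Fin d → ℤ) :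
    Set (EuclideanSpace ℝ (Fin d)) :=
  {u | ∃ c : List E, IsCycleList s t c ∧ u = (c.length : ℝ)⁻¹ • toR (c.map δ).sum}

/-- The set of all velocities of trajectories. -/
def velocitySet {d : ℕ} {V E : Type*} (s t : E → V) (δ : E → Fin d → ℤ) :
    Set (EuclideanSpace ℝ (Fin d)) :=
  {u | ∃ f : ℕ → E, IsTrajectory s t f ∧ HasVelocity δ f u}

/-- `p` is a path from vertex `a` to vertex `b`. -/
def PathFrom {V E : Type*} (s t : E → V) (a b : V) (p : List E) : Prop :=
  ∃ h : p ≠ [], p.Chain' (fun e f => t e = s f) ∧ s (p.head h) = a ∧ t (p.getLast h) = b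

/-- Strong connectivity: any vertex can be reached from any vertex by a path. -/
def StronglyConnected {V E : Type*} (s t : E → V) : Prop :=
  ∀ v w : V, ∃ p : List E, PathFrom s t v w p

/-- Source map of the periodic graph `G̃` associated to a displacement graph. -/
def sTil {d : ℕ} {V E : Type*} (s : E → V) (_δ : E → Fin d → ℤ) :
    E × (Fin d → ℤ) → V × (Fin d → ℤ) :=
  fun e => (s e.1, e.2)

/-- Target map of the periodic graph `G̃` associated to a displacement graph. -/
def tTil {d : ℕ} {V E : Type*} (t : E → V) (δ : E → Fin d → ℤ) :
    E × (Fin d → ℤ) → V × (Fin d → ℤ) :=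
  fun e => (t e.1, e.2 + δ e.1)

/-- Length of a shortest path from `a` to `b` (with `graphDist a a = 0`). -/
noncomputable def graphDist {V E : Type*} (s t : E → V) (a b : V) : ℕ :=
  sInf {n : ℕ | (a = b ∧ n = 0) ∨ ∃ p : List E, PathFrom s t a b p ∧ p.length = n}

/-!
A path in `G̃` from `(v, 0)` to `(v, x)` projects to a closed walk in `G` of total displacement
`x`, and running around that closed walk forever is a periodic trajectory of velocity
`x / length`. Taking `x = ±eᵢ` puts a positive multiple of every `±eᵢ` into the velocity set, and
a convex set containing a segment around `0` on every coordinate axis is a neighbourhood of `0`.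
-/

open Filter Topology Function Finset

section Convex

variable {E : Type*} [NormedAddCommGroup E] [NormedSpace ℝ E]

theorem Convex.eventually_smul_mem_nhds_zero {C : Set E} (hC : Convex ℝ C) {v : E} {a b : ℝ}
    (ha : a < 0) (hb : 0 < b) (hav : a • v ∈ C) (hbv : b • v ∈ C) :
    ∀ᶠ c in 𝓝 (0 : ℝ), c • v ∈ C :=
  mem_of_superset (Icc_mem_nhds ha hb)
    ((hC.linear_preimage (LinearMap.toSpanSingleton ℝ E v)).ordConnected.out hav hbv)

theorem Convex.zero_mem_interior_of_basis {ι : Type*} [Fintype ι] [Nonempty ι]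
    (b : Module.Basis ι ℝ E) {C : Set E} (hC : Convex ℝ C)
    (h : ∀ i, ∀ᶠ c in 𝓝 (0 : ℝ), c • b i ∈ C) : (0 : E) ∈ interior C := by
  have := Module.Finite.of_basis b
  set n : ℝ := (Fintype.card ι : ℝ)
  have hn : n ≠ 0 := by positivity
  have hcoord : ∀ i, Tendsto (fun x => n * b.repr x i) (𝓝 0) (𝓝 0) := fun i => by
    simpa using ((b.coord i).continuous_of_finiteDimensional.const_mul n).tendsto 0
  rw [mem_interior_iff_mem_nhds]
  filter_upwards [eventually_all.2 fun i => hcoord i (h i)] with x hx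
  have hsum : x = ∑ i, n⁻¹ • ((n * b.repr x i) • b i) := by
    simp only [smul_smul, ← mul_assoc, inv_mul_cancel₀ hn, one_mul, b.sum_repr]
  rw [hsum]
  exact hC.sum_mem (fun _ _ => by positivity) (by simp [n]) fun i _ => hx i

end Convex

namespace Function.Periodic

theorem sum_range_add_period {M : Type*} [AddCommMonoid M] {g : ℕ → M} {n : ℕ}
    (hg : Periodic g n) (N : ℕ) :
    ∑ k ∈ range (N + n), g k = ∑ k ∈ range N, g k + ∑ k ∈ range n, g k := by
  induction N with
  | zero => simp
  | succ N ih => rw [Nat.add_right_comm, sum_range_succ, ih, hg N, sum_range_succ]; abel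

theorem sum_range_shift {M : Type*} [AddCancelCommMonoid M] {g : ℕ → M} {n : ℕ}
    (hg : Periodic g n) : ∑ k ∈ range n, g (k + 1) = ∑ k ∈ range n, g k := by
  have h := sum_range_succ' g n
  rw [sum_range_succ, ← zero_add n, hg 0, zero_add] at h
  exact (add_right_cancel h).symm

theorem tendsto_average {E : Type*} [NormedAddCommGroup E] [NormedSpace ℝ E] {g : ℕ → E} {n : ℕ}
    (hg : Periodic g n) (hn : 0 < n) :
    Tendsto (fun N : ℕ => (N : ℝ)⁻¹ • ∑ k ∈ range N, g k) atTop
      (𝓝 ((n : ℝ)⁻¹ • ∑ k ∈ range n, g k)) := by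
  set u := (n : ℝ)⁻¹ • ∑ k ∈ range n, g k
  set H : ℕ → E := fun N => ∑ k ∈ range N, g k - (N : ℝ) • u
  have hnu : (n : ℝ) • u = ∑ k ∈ range n, g k := smul_inv_smul₀ (by positivity) _
  -- the centred partial sums `H` are periodic, hence bounded
  have hH : Periodic H n := fun N => by
    simp only [H, hg.sum_range_add_period, Nat.cast_add, add_smul, hnu]; abel
  obtain ⟨C, hC⟩ := isBounded_iff_forall_norm_le.1 ((Set.finite_lt_nat n).image H).isBounded
  have hHC : ∀ N, ‖H N‖ ≤ C := fun N => hC _ ⟨N % n, Nat.mod_lt N hn, hH.map_mod_nat N⟩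
  have hlim : Tendsto (fun N : ℕ => u + (N : ℝ)⁻¹ • H N) atTop (𝓝 u) := by
    simpa using tendsto_const_nhds.add
      ((tendsto_inv_atTop_nhds_zero_nat (𝕜 := ℝ)).zero_smul_isBoundedUnder_le
        (isBoundedUnder_of ⟨C, hHC⟩))
  refine hlim.congr' ?_
  filter_upwards [eventually_ne_atTop 0] with N hN
  simp only [H, smul_sub, inv_smul_smul₀ (Nat.cast_ne_zero.2 hN : (N : ℝ) ≠ 0)]
  abel

end Function.Periodic

section Paths

variable {V E : Type*} {s t : E → V} {a b : V} {p : List E}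

theorem PathFrom.map {V' E' : Type*} {s' t' : E' → V'} (φ : E → E') (ψ : V → V')
    (hs : ∀ e, s' (φ e) = ψ (s e)) (ht : ∀ e, t' (φ e) = ψ (t e)) (hp : PathFrom s t a b p) :
    PathFrom s' t' (ψ a) (ψ b) (p.map φ) := by
  obtain ⟨hne, hchain, ha, hb⟩ := hp
  refine ⟨by simpa using hne, (List.isChain_map φ).2 (hchain.imp fun e f h => ?_), ?_, ?_⟩
  · rw [hs, ht, h]
  · rw [List.head_map, hs, ha]
  · rw [List.getLast_map, ht, hb]

theorem pathFrom_singleton {e : E} : PathFrom s t a b [e] ↔ s e = a ∧ t e = b := by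
  unfold PathFrom
  constructor
  · rintro ⟨_, -, ha, hb⟩
    exact ⟨ha, hb⟩
  · rintro ⟨ha, hb⟩
    exact ⟨List.cons_ne_nil _ _, List.isChain_singleton e, ha, hb⟩

theorem pathFrom_cons_cons {e f : E} {r : List E} :
    PathFrom s t a b (e :: f :: r) ↔ s e = a ∧ PathFrom s t (t e) b (f :: r) := by
  unfold PathFrom
  constructor
  · rintro ⟨_, hc, ha, hb⟩
    exact ⟨ha, List.cons_ne_nil _ _, (List.isChain_cons_cons.1 hc).2,
      (List.isChain_cons_cons.1 hc).1.symm, hb⟩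
  · rintro ⟨ha, _, hc, hf, hb⟩
    exact ⟨List.cons_ne_nil _ _, List.isChain_cons_cons.2 ⟨hf.symm, hc⟩, ha, hb⟩

theorem PathFrom.eq_add_sum {A : Type*} [AddCommMonoid A] (h : V → A) (w : E → A)
    (hw : ∀ e, h (t e) = h (s e) + w e) (hp : PathFrom s t a b p) :
    h b = h a + (p.map w).sum := by
  induction p generalizing a with
  | nil => exact absurd rfl hp.1
  | cons e r ih =>
    cases r with
    | nil =>
      obtain ⟨rfl, rfl⟩ := pathFrom_singleton.1 hp
      simp [hw]
    | cons f r =>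
      obtain ⟨rfl, hrest⟩ := pathFrom_cons_cons.1 hp
      rw [ih hrest, hw]
      simp [add_assoc]

theorem PathFrom.exists_periodic_trajectory {v : V} {q : List E} (hq : PathFrom s t v v q) :
    ∃ f : ℕ → E, IsTrajectory s t f ∧ Periodic f q.length ∧
      ∀ k (hk : k < q.length), f k = q[k] := by
  obtain ⟨hne, hchain, hhead, hlast⟩ := hq
  set n := q.length
  have hn : 0 < n := List.length_pos_iff.2 hne
  set f : ℕ → E := fun k => q[k % n]'(Nat.mod_lt _ hn)
  have hf : Periodic f n := fun k => by simp [f]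
  have hfq : ∀ k (hk : k < n), f k = q[k] := fun k hk => by simp [f, Nat.mod_eq_of_lt hk]
  have hstep : ∀ i < n, s (f (i + 1)) = t (f i) := by
    intro i hi
    rcases Nat.lt_or_eq_of_le (show i + 1 ≤ n from hi) with h | h
    · rw [hfq _ h, hfq _ hi]
      exact (List.isChain_iff_getElem.1 hchain i h).symm
    · rw [h, hf.eq, hfq 0 hn, hfq i hi, ← List.head_eq_getElem hne, hhead, ← hlast,
        List.getLast_eq_getElem hne]
      congr 2
      omega
  refine ⟨f, fun k => ?_, hf, hfq⟩
  have hper : Periodic f (k / n * n) := by simpa using hf.nat_mul (k / n)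
  rw [← Nat.mod_add_div' k n, add_right_comm, hper, hper]
  exact hstep _ (Nat.mod_lt _ hn)

end Paths

section DisplacementGraph

variable {d : ℕ} {V E : Type*}

theorem toR_neg (x : Fin d → ℤ) : toR (-x) = -toR x := by
  ext; simp [toR]

theorem toR_single (i : Fin d) : toR (Pi.single i 1) = EuclideanSpace.single i (1 : ℝ) := by
  ext j; by_cases h : j = i <;> simp [toR, h]

theorem toR_list_sum (l : List (Fin d → ℤ)) : toR l.sum = (l.map toR).sum := by
  induction l with
  | nil => ext; simp [toR]
  | cons x l ih => ext; simp [← ih, toR]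

theorem Function.Periodic.hasVelocity (δ : E → Fin d → ℤ) {f : ℕ → E} {n : ℕ}
    (hf : Periodic f n) (hn : 0 < n) :
    HasVelocity δ f ((n : ℝ)⁻¹ • ∑ k ∈ range n, toR (δ (f k))) := by
  have hg : Periodic (fun k => toR (δ (f k))) n := fun k => by simp only [hf k]
  have hshift : Periodic (fun k => toR (δ (f (k + 1)))) n := fun k => by
    simp only [Nat.add_right_comm k n 1, hf (k + 1)]
  unfold HasVelocity
  rw [← hg.sum_range_shift]
  refine (hshift.tendsto_average hn).congr fun N => ?_
  rw [← Finset.Ico_add_one_right_eq_Icc, Finset.sum_Ico_eq_sum_range]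
  simp [add_comm]

theorem PathFrom.smul_sum_mem_velocitySet {s t : E → V} (δ : E → Fin d → ℤ) {v : V}
    {q : List E} (hq : PathFrom s t v v q) :
    (q.length : ℝ)⁻¹ • toR (q.map δ).sum ∈ velocitySet s t δ := by
  obtain ⟨f, hf, hper, hfq⟩ := hq.exists_periodic_trajectory
  refine ⟨f, hf, ?_⟩
  convert hper.hasVelocity δ (List.length_pos_iff.2 hq.1) using 2
  rw [toR_list_sum, List.map_map, ← Fin.sum_univ_fun_getElem, Finset.sum_range]
  simp [hfq]

theorem exists_pathFrom_map_sum_eq (s t : E → V) (δ : E → Fin d → ℤ)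
    (hconn : ∀ a b : V × (Fin d → ℤ), a ≠ b →
      ∃ p : List (E × (Fin d → ℤ)), PathFrom (sTil s δ) (tTil t δ) a b p)
    (v : V) {x : Fin d → ℤ} (hx : x ≠ 0) :
    ∃ q : List E, PathFrom s t v v q ∧ (q.map δ).sum = x := by
  obtain ⟨p, hp⟩ := hconn (v, 0) (v, x) (by simpa [Prod.ext_iff] using hx.symm)
  refine ⟨p.map Prod.fst,
    hp.map (s' := s) (t' := t) Prod.fst Prod.fst (fun _ => rfl) (fun _ => rfl), ?_⟩
  have := hp.eq_add_sum Prod.snd (fun e => δ e.1) (fun _ => rfl)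
  simpa [List.map_map, Function.comp_def] using this.symm

theorem exists_pos_smul_toR_mem_velocitySet [Nonempty V] (s t : E → V) (δ : E → Fin d → ℤ)
    (hconn : ∀ a b : V × (Fin d → ℤ), a ≠ b →
      ∃ p : List (E × (Fin d → ℤ)), PathFrom (sTil s δ) (tTil t δ) a b p)
    {x : Fin d → ℤ} (hx : x ≠ 0) : ∃ r : ℝ, 0 < r ∧ r • toR x ∈ velocitySet s t δ := by
  obtain ⟨q, hq, hsum⟩ := exists_pathFrom_map_sum_eq s t δ hconn (Classical.arbitrary V) hx
  exact ⟨_, inv_pos.2 (Nat.cast_pos.2 (List.length_pos_iff.2 hq.1)),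
    hsum ▸ hq.smul_sum_mem_velocitySet δ⟩

end DisplacementGraph

theorem stmt17_general {d : ℕ} (hd : 1 ≤ d) {V E : Type*} [Nonempty V]
    (s t : E → V) (δ : E → Fin d → ℤ)
    (hconn : ∀ a b : V × (Fin d → ℤ), a ≠ b →
      ∃ p : List (E × (Fin d → ℤ)), PathFrom (sTil s δ) (tTil t δ) a b p) :
    (0 : EuclideanSpace ℝ (Fin d)) ∈ interior (convexHull ℝ (velocitySet s t δ)) := by
  have : Nonempty (Fin d) := ⟨⟨0, hd⟩⟩
  have hC := convex_convexHull ℝ (velocitySet s t δ)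
  refine hC.zero_mem_interior_of_basis (EuclideanSpace.basisFun (Fin d) ℝ).toBasis fun i => ?_
  have hi : (Pi.single i 1 : Fin d → ℤ) ≠ 0 := by simp
  obtain ⟨a, ha, hav⟩ := exists_pos_smul_toR_mem_velocitySet s t δ hconn (neg_ne_zero.2 hi)
  obtain ⟨b, hb, hbv⟩ := exists_pos_smul_toR_mem_velocitySet s t δ hconn hi
  rw [toR_neg, toR_single, smul_neg, ← neg_smul] at hav
  rw [toR_single] at hbv
  simpa using hC.eventually_smul_mem_nhds_zero (neg_neg_of_pos ha) hb
    (subset_convexHull ℝ _ hav) (subset_convexHull ℝ _ hbv)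

/-- Full-dimensionality for strongly connected periodic graphs: if the periodic
graph `G̃` associated to `(G, δ)` is strongly connected, then `0` is an interior
point of the convex hull of the set of all velocities of trajectories. -/
theorem stmt17 {d : ℕ} (hd : 1 ≤ d) {V E : Type*} [Fintype V] [Nonempty V] [Fintype E]
    (s t : E → V) (δ : E → Fin d → ℤ)
    (hconn : ∀ a b : V × (Fin d → ℤ), a ≠ b →
      ∃ p : List (E × (Fin d → ℤ)), PathFrom (sTil s δ) (tTil t δ) a b p) :
    (0 : EuclideanSpace ℝ (Fin d)) ∈ interior (convexHull ℝ (velocitySet s t δ)) :=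
  stmt17_general hd s t δ hconn
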